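/- Let n ≥ 1. If A is a Tⁿ-atom (an atom of the positive operator Tⁿ), then there exists a T-atom B such that A ⊆ B a.e. -/

import Mathlib

open MeasureTheory ENNReal Filter Set

noncomputable section

namespace PaperAtoms

variable {Ω : Type*} [MeasurableSpace Ω] {μ : MeasureTheory.Measure Ω} {p : ℝ≥0∞} [Fact (1 ≤ p)]

/-- `T` is a positive operator on `Lp`. -/
def IsPositiveOp (T : Lp ℝ p μ →L[ℝ] Lp ℝ p μ) : Prop :=
  ∀ f : Lp ℝ p μ, 0 ≤ f → 0 ≤ T f

/-- A measurable set `A` is `T`-invariant if `T f` vanishes a.e. on `Aᶜ` for every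
nonnegative `f ∈ Lp` vanishing a.e. on `Aᶜ`. -/
def Invariant (T : Lp ℝ p μ →L[ℝ] Lp ℝ p μ) (A : Set Ω) : Prop :=
  MeasurableSet A ∧
    ∀ f : Lp ℝ p μ, 0 ≤ f → (∀ᵐ x ∂μ, x ∉ A → f x = 0) → ∀ᵐ x ∂μ, x ∉ A → T f x = 0

/-- `A` is `T`-co-invariant if `Aᶜ` is `T`-invariant. -/
def CoInvariant (T : Lp ℝ p μ →L[ℝ] Lp ℝ p μ) (A : Set Ω) : Prop :=
  Invariant T Aᶜ

/-- `A` is `T`-admissible if it belongs to the σ-field generated by the `T`-invariant sets. -/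
def Admissible (T : Lp ℝ p μ →L[ℝ] Lp ℝ p μ) (A : Set Ω) : Prop :=
  MeasurableSet[MeasurableSpace.generateFrom {B : Set Ω | Invariant T B}] A

/-- A `T`-atom is a minimal `T`-admissible set with positive measure. -/
def Atom (T : Lp ℝ p μ →L[ℝ] Lp ℝ p μ) (A : Set Ω) : Prop :=
  Admissible T A ∧ 0 < μ A ∧
    ∀ B : Set Ω, Admissible T B → B ≤ᵐ[μ] A → μ B = 0 ∨ B =ᵐ[μ] A

/-- `FA` is (a version of) the future of `A`: the minimal `T`-invariant set containing `A` a.e. -/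
def IsFuture (T : Lp ℝ p μ →L[ℝ] Lp ℝ p μ) (A FA : Set Ω) : Prop :=
  Invariant T FA ∧ A ≤ᵐ[μ] FA ∧
    ∀ B : Set Ω, Invariant T B → A ≤ᵐ[μ] B → FA ≤ᵐ[μ] B

/-- `PA` is (a version of) the past of `A`: the minimal `T`-co-invariant set containing `A` a.e. -/
def IsPast (T : Lp ℝ p μ →L[ℝ] Lp ℝ p μ) (A PA : Set Ω) : Prop :=
  CoInvariant T PA ∧ A ≤ᵐ[μ] PA ∧
    ∀ B : Set Ω, CoInvariant T B → A ≤ᵐ[μ] B → PA ≤ᵐ[μ] B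

/-- `A` is `T`-convex if `A = F(A) ∩ P(A)` a.e. -/
def Convexe (T : Lp ℝ p μ →L[ℝ] Lp ℝ p μ) (A : Set Ω) : Prop :=
  MeasurableSet A ∧
    ∃ FA PA : Set Ω, IsFuture T A FA ∧ IsPast T A PA ∧ A =ᵐ[μ] (FA ∩ PA : Set Ω)

/-- Multiplication by the indicator function of `A`, as a bounded operator on `Lp`
(defined as `0` if `A` is not measurable). -/
def indicatorCLM (μ : MeasureTheory.Measure Ω) (p : ℝ≥0∞) [Fact (1 ≤ p)] (A : Set Ω) :
    Lp ℝ p μ →L[ℝ] Lp ℝ p μ := by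
  classical
  exact if hA : MeasurableSet A then
    LinearMap.mkContinuous
      { toFun := fun f => ((Lp.memLp f).indicator hA).toLp (A.indicator f)
        map_add' := fun f g => by
          rw [← MemLp.toLp_add]
          refine MemLp.toLp_congr _ _ ?_
          filter_upwards [Lp.coeFn_add f g] with x hx
          simp only [Pi.add_apply, Set.indicator_apply, hx]
          split <;> simp
        map_smul' := fun c f => by
          rw [RingHom.id_apply, ← MemLp.toLp_const_smul]
          refine MemLp.toLp_congr _ _ ?_
          filter_upwards [Lp.coeFn_smul c f] with x hx
          simp only [Pi.smul_apply, Set.indicator_apply, hx, smul_eq_mul]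
          split <;> simp }
      1
      (fun f => by
        simp only [LinearMap.coe_mk, AddHom.coe_mk, one_mul]
        rw [Lp.norm_toLp, Lp.norm_def]
        exact ENNReal.toReal_mono (Lp.eLpNorm_ne_top f) (eLpNorm_indicator_le _))
  else 0

/-- The restriction `T_A = 1_A T 1_A` of `T` to a measurable set `A`. -/
def restrictOp (T : Lp ℝ p μ →L[ℝ] Lp ℝ p μ) (A : Set Ω) : Lp ℝ p μ →L[ℝ] Lp ℝ p μ :=
  (indicatorCLM μ p A).comp (T.comp (indicatorCLM μ p A))

/-- The spectral radius of a bounded operator, via Gelfand's formula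
`ρ(T) = inf_n ‖Tⁿ‖^(1/n) = lim_n ‖Tⁿ‖^(1/n)`. -/
def specRadius (T : Lp ℝ p μ →L[ℝ] Lp ℝ p μ) : ℝ :=
  ⨅ n : ℕ, ‖T ^ (n + 1)‖ ^ (((n : ℝ) + 1)⁻¹)

/-- The spectral radius `ρ(A)` of the restriction of `T` to `A`. -/
def rhoSet (T : Lp ℝ p μ →L[ℝ] Lp ℝ p μ) (A : Set Ω) : ℝ :=
  specRadius (restrictOp T A)

/-- A measurable set `A` with `μ A > 0` is `T`-irreducible if the restriction of `T` to `A`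
is irreducible, i.e. every `T_A`-invariant subset of `A` is a.e. trivial. -/
def Irreducible (T : Lp ℝ p μ →L[ℝ] Lp ℝ p μ) (A : Set Ω) : Prop :=
  MeasurableSet A ∧ 0 < μ A ∧
    ∀ B : Set Ω, Invariant (restrictOp T A) B → B ≤ᵐ[μ] A → μ B = 0 ∨ B =ᵐ[μ] A

/-- `T` is power compact if some power `T^k`, `k ≥ 1`, is a compact operator. -/
def PowerCompact (T : Lp ℝ p μ →L[ℝ] Lp ℝ p μ) : Prop :=
  ∃ k : ℕ, 1 ≤ k ∧ IsCompactOperator (⇑(T ^ k))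

/-- `B ≼ A` for atoms: `B ⊆ F(A)` a.e. -/
def Prec (T : Lp ℝ p μ →L[ℝ] Lp ℝ p μ) (B A : Set Ω) : Prop :=
  ∃ FA : Set Ω, IsFuture T A FA ∧ B ≤ᵐ[μ] FA

/-- `B ≺ A` for atoms: `B ⊆ F(A)` a.e. and `B ≠ A` a.e. -/
def PrecStrict (T : Lp ℝ p μ →L[ℝ] Lp ℝ p μ) (B A : Set Ω) : Prop :=
  Prec T B A ∧ ¬ (B =ᵐ[μ] A)

/-- A critical atom: a `T`-atom whose spectral radius equals that of `T`. -/
def CriticalAtom (T : Lp ℝ p μ →L[ℝ] Lp ℝ p μ) (A : Set Ω) : Prop :=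
  Atom T A ∧ rhoSet T A = specRadius T

/-- There is a chain `A = A_0 ≻ A_1 ≻ ⋯ ≻ A_n` of critical atoms starting at `A`. -/
def ChainFrom (T : Lp ℝ p μ →L[ℝ] Lp ℝ p μ) (A : Set Ω) (n : ℕ) : Prop :=
  ∃ c : ℕ → Set Ω, c 0 = A ∧ (∀ i ≤ n, CriticalAtom T (c i)) ∧
    ∀ i < n, PrecStrict T (c (i + 1)) (c i)

/-- The generalized eigenspace `⋃ₖ ker (T - λ id)^k` of `T` at `λ`. -/
def genEigenspace (T : Lp ℝ p μ →L[ℝ] Lp ℝ p μ) (l : ℝ) : Submodule ℝ (Lp ℝ p μ) :=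
  ⨆ k : ℕ, LinearMap.ker (((T - l • (1 : Lp ℝ p μ →L[ℝ] Lp ℝ p μ)) ^ k : Lp ℝ p μ →L[ℝ] Lp ℝ p μ) : Lp ℝ p μ →ₗ[ℝ] Lp ℝ p μ)

/-- The algebraic multiplicity of `λ` for `T`. -/
def algMult (T : Lp ℝ p μ →L[ℝ] Lp ℝ p μ) (l : ℝ) : ℕ :=
  Module.finrank ℝ ↥(genEigenspace T l)

/-- The set of `k` at which the kernels of `(T - ρ(T) id)^k` stabilize; the ascent of `T`
at `ρ(T)` is its infimum. -/
def ascentSet (T : Lp ℝ p μ →L[ℝ] Lp ℝ p μ) : Set ℕ :=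
  {k : ℕ | LinearMap.ker (((T - specRadius T • (1 : Lp ℝ p μ →L[ℝ] Lp ℝ p μ)) ^ k : Lp ℝ p μ →L[ℝ] Lp ℝ p μ) : Lp ℝ p μ →ₗ[ℝ] Lp ℝ p μ)
      = LinearMap.ker (((T - specRadius T • (1 : Lp ℝ p μ →L[ℝ] Lp ℝ p μ)) ^ (k + 1) : Lp ℝ p μ →L[ℝ] Lp ℝ p μ) : Lp ℝ p μ →ₗ[ℝ] Lp ℝ p μ)}

/-- `D` is (a version of) the set `T(C)`, i.e. the support of `T(1_C f)` for any a.e.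
positive `f ∈ Lp`. -/
def IsImage (T : Lp ℝ p μ →L[ℝ] Lp ℝ p μ) (C D : Set Ω) : Prop :=
  MeasurableSet C ∧ MeasurableSet D ∧
    ∀ f : Lp ℝ p μ, (∀ᵐ x ∂μ, 0 < f x) →
      D =ᵐ[μ] ({x | T (indicatorCLM μ p C f) x ≠ 0} : Set Ω)

/-- `D` is (a version of) the `k`-fold iterated image `T^k(C)`. -/
def IsIterImage (T : Lp ℝ p μ →L[ℝ] Lp ℝ p μ) : ℕ → Set Ω → Set Ω → Prop
  | 0, C, D => D = C
  | (k + 1), C, D => ∃ E : Set Ω, IsIterImage T k C E ∧ IsImage T E D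

/-
Since `T` is positive, every `T`-invariant set is `Tⁿ`-invariant, so the `T`-admissible σ-field
is coarser than the `Tⁿ`-admissible one, and a `Tⁿ`-atom `A` is either contained in or disjoint
from each `T`-admissible set. Minimizing a finite measure equivalent to `μ` over the
`T`-admissible sets containing `A` gives an a.e. smallest such set `B`. A `T`-admissible subset
of `B` either contains `A`, and then equals `B`, or misses `A`; in the latter case `B` minus it
still contains `A`, so it is null. Hence `B` is a `T`-atom.
-/

variable {Ω : Type*} [MeasurableSpace Ω] {μ : MeasureTheory.Measure Ω} {p : ℝ≥0∞}

lemma exists_ae_le_forall_of_sInter_mem [SFinite μ] {𝓒 : Set (Set Ω)}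
    (hmeas : ∀ s ∈ 𝓒, MeasurableSet s)
    (hinter : ∀ S ⊆ 𝓒, S.Countable → ⋂₀ S ∈ 𝓒) :
    ∃ B ∈ 𝓒, ∀ C ∈ 𝓒, B ≤ᵐ[μ] C := by
  obtain ⟨ν, _, hμν, -⟩ := exists_isFiniteMeasure_absolutelyContinuous μ
  have hne : 𝓒.Nonempty := ⟨_, hinter ∅ (empty_subset _) countable_empty⟩
  obtain ⟨u, -, hu, hu𝓒⟩ := exists_seq_tendsto_sInf (hne.image ν) (OrderBot.bddBelow _)
  choose c hc𝓒 hcu using hu𝓒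
  have hB : ⋂₀ range c ∈ 𝓒 := hinter _ (range_subset_iff.2 hc𝓒) (countable_range c)
  have hνB : ν (⋂₀ range c) ≤ sInf (ν '' 𝓒) :=
    ge_of_tendsto' hu fun k => hcu k ▸ measure_mono (sInter_subset_of_mem (mem_range_self k))
  refine ⟨_, hB, fun C hC => ae_le_set.2 (hμν ?_)⟩
  have hBC : ⋂₀ range c ∩ C ∈ 𝓒 := by
    rw [← sInter_pair]
    exact hinter _ (pair_subset hB hC) ((countable_singleton C).insert _)
  rw [← sdiff_self_inter, measure_sdiff inter_subset_left (hmeas _ hBC).nullMeasurableSet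
    (measure_ne_top ν _)]
  exact tsub_eq_zero_of_le (hνB.trans (sInf_le (mem_image_of_mem ν hBC)))

section Admissible

variable [Fact (1 ≤ p)]

lemma Invariant.pow {T : Lp ℝ p μ →L[ℝ] Lp ℝ p μ} (hT : IsPositiveOp T) {A : Set Ω}
    (hA : Invariant T A) (k : ℕ) : Invariant (T ^ k) A := by
  induction k with
  | zero => exact ⟨hA.1, fun f _ hfA => by simpa using hfA⟩
  | succ k ih =>
    refine ⟨hA.1, fun f hf hfA => ?_⟩
    rw [pow_succ]
    exact ih.2 (T f) (hT f hf) (hA.2 f hf hfA)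

lemma Admissible.pow {T : Lp ℝ p μ →L[ℝ] Lp ℝ p μ} (hT : IsPositiveOp T) {A : Set Ω}
    (hA : Admissible T A) (k : ℕ) : Admissible (T ^ k) A :=
  MeasurableSpace.generateFrom_mono (fun _ hB => hB.pow hT k) _ hA

lemma Admissible.measurableSet {T : Lp ℝ p μ →L[ℝ] Lp ℝ p μ} {A : Set Ω}
    (hA : Admissible T A) : MeasurableSet A :=
  MeasurableSpace.generateFrom_le (fun _ hB => hB.1) _ hA

lemma Atom.ae_le_or_ae_le_compl {S T : Lp ℝ p μ →L[ℝ] Lp ℝ p μ}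
    (hST : ∀ C, Admissible S C → Admissible T C) {A : Set Ω} (hA : Atom T A) {C : Set Ω}
    (hC : Admissible S C) : A ≤ᵐ[μ] C ∨ A ≤ᵐ[μ] Cᶜ := by
  rcases hA.2.2 (A ∩ C) (hA.1.inter (hST C hC)) inter_subset_left.eventuallyLE with h | h
  · exact Or.inr (ae_le_set.2 ((congrArg μ Set.sdiff_compl).trans h))
  · exact Or.inl (h.symm.le.trans inter_subset_right.eventuallyLE)

theorem Atom.exists_atom_ae_superset [SFinite μ] {S T : Lp ℝ p μ →L[ℝ] Lp ℝ p μ}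
    (hST : ∀ C, Admissible S C → Admissible T C) {A : Set Ω} (hA : Atom T A) :
    ∃ B, Atom S B ∧ A ≤ᵐ[μ] B := by
  have hinter : ∀ 𝓢 ⊆ {C | Admissible S C ∧ A ≤ᵐ[μ] C}, 𝓢.Countable →
      Admissible S (⋂₀ 𝓢) ∧ A ≤ᵐ[μ] ⋂₀ 𝓢 := fun 𝓢 h𝓢 hc =>
    ⟨.sInter hc fun s hs => (h𝓢 hs).1,
      ((eventually_countable_ball hc).2 fun s hs => (h𝓢 hs).2).mono
        fun _ hx hxA => mem_sInter.2 fun s hs => hx s hs hxA⟩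
  obtain ⟨B, ⟨hBS, hAB⟩, hBmin⟩ :=
    exists_ae_le_forall_of_sInter_mem (μ := μ) (fun _ hC => hC.1.measurableSet) hinter
  refine ⟨B, ⟨hBS, hA.2.1.trans_le (measure_mono_ae hAB), fun D hD hDB => ?_⟩, hAB⟩
  rcases hA.ae_le_or_ae_le_compl hST hD with hAD | hAD
  · exact Or.inr (hDB.antisymm (hBmin D ⟨hD, hAD⟩))
  · have hABD : A ≤ᵐ[μ] B \ D :=
      hAB.mp (hAD.mono fun _ hxD hxB hxA => ⟨hxB hxA, hxD hxA⟩)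
    have hBD : μ (B ∩ D) = 0 := by
      simpa only [sdiff_sdiff_right_self] using ae_le_set.1 (hBmin (B \ D) ⟨hBS.diff hD, hABD⟩)
    exact Or.inl (measure_mono_null_ae (hDB.mono fun _ hxB hxD => ⟨hxB hxD, hxD⟩) hBD)

end Admissible

theorem statement15_general [SigmaFinite μ] [Fact (1 ≤ p)]
    (T : Lp ℝ p μ →L[ℝ] Lp ℝ p μ) (hT : IsPositiveOp T)
    (n : ℕ) (A : Set Ω) (hA : Atom (T ^ n) A) :
    ∃ B : Set Ω, Atom T B ∧ A ≤ᵐ[μ] B :=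
  hA.exists_atom_ae_superset fun _ hC => hC.pow hT n

theorem statement15 [SigmaFinite μ] (hμ : μ Set.univ ≠ 0) [Fact (1 ≤ p)]
    (hp : 1 < p) (hp' : p ≠ ∞)
    (T : Lp ℝ p μ →L[ℝ] Lp ℝ p μ) (hT : IsPositiveOp T)
    (n : ℕ) (hn : 1 ≤ n) (A : Set Ω) (hA : Atom (T ^ n) A) :
    ∃ B : Set Ω, Atom T B ∧ A ≤ᵐ[μ] B :=
  statement15_general T hT n A hA

end PaperAtoms
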